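/- If d + t faulty processes cause a disagreement producing a ≥ 2 disagreeing decisions (branches) under voting threshold h, then d + t ≥ (a·h − n)/(a − 1); equivalently, the number of branches satisfies a ≤ (n − (d+t))/(h − (d+t)) whenever h > d + t. -/

import Mathlib

/-! Multiplying the threshold condition `(n - f)/a + f ≥ h` by `a` gives `a (h - f) ≤ n - f`:
the `a` branches need `a` disjoint honest quorum parts of size at least `h - f` each. Both bounds
are this single inequality solved for `f` and for `a`, respectively. -/

section BranchBound

variable {K : Type*} [Field K] [LinearOrder K] [IsStrictOrderedRing K] {n f h a : K}

theorem mul_sub_le_sub_of_le_div_add (ha : 0 < a) (hbranch : h ≤ (n - f) / a + f) :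
    a * (h - f) ≤ n - f := by
  rw [mul_comm, ← le_div_iff₀ ha]
  linarith

theorem div_sub_one_le_of_mul_sub_le_sub (ha : 1 < a) (hkey : a * (h - f) ≤ n - f) :
    (a * h - n) / (a - 1) ≤ f := by
  rw [div_le_iff₀ (sub_pos.mpr ha)]
  linarith

theorem le_div_sub_of_mul_sub_le_sub (hfh : f < h) (hkey : a * (h - f) ≤ n - f) :
    a ≤ (n - f) / (h - f) :=
  (le_div_iff₀ (sub_pos.mpr hfh)).mpr hkey

end BranchBound

theorem branch_bound_general
    (n f h a : ℚ) (ha : 2 ≤ a) (hfh : f < h)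
    (hbranch : (n - f) / a + f ≥ h) :
    f ≥ (a * h - n) / (a - 1) ∧ a ≤ (n - f) / (h - f) := by
  have hkey : a * (h - f) ≤ n - f := mul_sub_le_sub_of_le_div_add (by linarith) hbranch
  exact ⟨div_sub_one_le_of_mul_sub_le_sub (by linarith) hkey,
    le_div_sub_of_mul_sub_le_sub hfh hkey⟩

/-- Number-of-branches bound: if `f = d + t` faulty processes create `a ≥ 2`
disagreeing branches under voting threshold `h > f`, i.e. each of the `a`
disjoint honest partitions of size `(n - f)/a` together with the faulty
processes reaches the threshold (`(n - f)/a + f ≥ h`), then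
`f ≥ (a·h − n)/(a − 1)` and `a ≤ (n − f)/(h − f)`. -/
theorem branch_bound
    (n f h a : ℚ) (ha : 2 ≤ a) (hf : 0 ≤ f) (hfh : f < h)
    (hbranch : (n - f) / a + f ≥ h) :
    f ≥ (a * h - n) / (a - 1) ∧ a ≤ (n - f) / (h - f) :=
  branch_bound_general n f h a ha hfh hbranch
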